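/- Let (k_n) satisfy k_n/(ln n)⁴ → ∞ and define G_k(t) as the minimum over ε ∈ [0,t] of (2e³/9)F_d(t−ε) + (d²+d)H_k(ε) + 2d·R_k(ε) (with H, R as in the paper). Then for every λ > 2, n·G_{k_n}(λ·ln n) → 0 as n → ∞. -/

import Mathlib

/-!
It suffices to take `ε = 1` in the minimum. The chi-square tail decays like `e^{-a x}` for every
`a < 1/2`, so `n F_d(λ ln n - 1) = O(n^{1 - aλ})`, which tends to `0` once `1/λ < a < 1/2`; this
is where `λ > 2` enters. Both `H_k(1)` and `R_k(1)` are `O(exp(-c k^{1/3}))`, and `k_n ≥ (ln n)⁴`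
eventually forces `c k_n^{1/3} ≥ 2 ln n`, so `n H_{k_n}(1)` and `n R_{k_n}(1)` tend to `0` too.
-/

open MeasureTheory Filter
open scoped Topology

noncomputable section

/-- The upper tail `F_d(x) = P(χ²(d) > x)` of the chi-square distribution with `d` degrees
of freedom. -/
def chiSqTail (d : ℕ) (x : ℝ) : ℝ :=
  ∫ y in Set.Ioi x, y ^ ((d : ℝ) / 2 - 1) * Real.exp (-y / 2) /
    (2 ^ ((d : ℝ) / 2) * Real.Gamma ((d : ℝ) / 2))

/-- The function `H_k(ε)` of the paper. -/
def Hfun (d k : ℕ) (ε : ℝ) : ℝ :=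
  Real.exp (-((k : ℝ) * ε ^ ((2 : ℝ) / 3) * ((d : ℝ) + 2) ^ (-(4 : ℝ) / 3)) /
    ((d : ℝ) ^ 2 * ((k : ℝ) ^ ((1 : ℝ) / 3) + ((d : ℝ) + 2) ^ ((1 : ℝ) / 3) * ε ^ ((1 : ℝ) / 3)) ^ 2))

/-- The function `R_k(ε)` of the paper. -/
def Rfun (d k : ℕ) (ε : ℝ) : ℝ :=
  Real.exp (-((k : ℝ) ^ ((1 : ℝ) / 3) * ε ^ ((2 : ℝ) / 3)) /
    ((d : ℝ) ^ 2 * ((d : ℝ) + 2) ^ ((4 : ℝ) / 3)))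

/-- The function `G_k(t)` of the paper: minimum over `ε ∈ [0,t]` of
`(2e³/9)F_d(t−ε) + (d²+d)H_k(ε) + 2d R_k(ε)`. -/
def Gfun (d k : ℕ) (t : ℝ) : ℝ :=
  sInf ((fun ε => (2 * Real.exp 3 / 9) * chiSqTail d (t - ε) +
    ((d : ℝ) ^ 2 + d) * Hfun d k ε + 2 * d * Rfun d k ε) '' Set.Icc 0 t)

open Real Set Asymptotics

lemma chiSqTail_nonneg (d : ℕ) {x : ℝ} (hx : 0 ≤ x) : 0 ≤ chiSqTail d x := by
  refine setIntegral_nonneg measurableSet_Ioi fun y hy => ?_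
  have hy0 : 0 < y := hx.trans_lt hy
  have hΓ : 0 ≤ Gamma ((d : ℝ) / 2) := Gamma_nonneg_of_nonneg (by positivity)
  positivity

lemma chiSqTail_isBigO_exp (d : ℕ) {a : ℝ} (ha : 0 < a) (ha' : a < 1 / 2) :
    chiSqTail d =O[atTop] fun x => exp (-(a * x)) := by
  set Z : ℝ := 2 ^ ((d : ℝ) / 2) * Gamma ((d : ℝ) / 2)
  have hZ : 0 ≤ Z := by
    have hΓ : 0 ≤ Gamma ((d : ℝ) / 2) := Gamma_nonneg_of_nonneg (by positivity)
    positivity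
  -- the factor `exp (-(1/2 - a) y)` absorbs the power `y ^ (d/2 - 1)`
  obtain ⟨X, hX⟩ := eventually_atTop.1 <|
    (tendsto_rpow_mul_exp_neg_mul_atTop_nhds_zero ((d : ℝ) / 2 - 1) (1 / 2 - a)
      (by linarith)).eventually (ge_mem_nhds one_pos)
  have hdensity : ∀ y, max X 1 ≤ y →
      y ^ ((d : ℝ) / 2 - 1) * exp (-y / 2) / Z ≤ Z⁻¹ * exp (-(a * y)) := by
    intro y hy
    have hsplit : exp (-y / 2) = exp (-(1 / 2 - a) * y) * exp (-(a * y)) := by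
      rw [← exp_add]; ring_nf
    rw [hsplit, ← mul_assoc, div_eq_inv_mul]
    gcongr
    exact mul_le_of_le_one_left (exp_pos _).le (hX y (le_of_max_le_left hy))
  refine IsBigO.of_bound (Z⁻¹ * a⁻¹) ?_
  filter_upwards [eventually_ge_atTop (max X 1)] with x hx
  have hx0 : 0 ≤ x := zero_le_one.trans (le_of_max_le_right hx)
  rw [norm_of_nonneg (chiSqTail_nonneg d hx0), norm_of_nonneg (exp_pos _).le]
  calc chiSqTail d x ≤ ∫ y in Ioi x, Z⁻¹ * exp (-(a * y)) := by
        refine integral_mono_of_nonneg ?_ ?_ ((ae_restrict_iff' measurableSet_Ioi).2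
          (.of_forall fun y hy => hdensity y (hx.trans hy.le)))
        · refine (ae_restrict_iff' measurableSet_Ioi).2 (.of_forall fun y hy => ?_)
          have hy0 : 0 < y := hx0.trans_lt hy
          positivity
        · simpa only [neg_mul] using ((exp_neg_integrableOn_Ioi x ha).const_mul Z⁻¹ :)
    _ = Z⁻¹ * a⁻¹ * exp (-(a * x)) := by
        simp only [← neg_mul]
        rw [integral_const_mul, integral_exp_mul_Ioi (by linarith)]
        field_simp

lemma tendsto_natCast_mul_exp_neg {u : ℕ → ℝ}
    (hu : Tendsto (fun n : ℕ => log n - u n) atTop atBot) :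
    Tendsto (fun n : ℕ => (n : ℝ) * exp (-u n)) atTop (𝓝 0) := by
  refine (tendsto_exp_atBot.comp hu).congr' ?_
  filter_upwards [eventually_ge_atTop 1] with n hn
  rw [Function.comp_apply, sub_eq_add_neg, exp_add, exp_log (by exact_mod_cast hn)]

lemma tendsto_natCast_mul_chiSqTail (d : ℕ) {lam : ℝ} (hlam : 2 < lam) :
    Tendsto (fun n : ℕ => (n : ℝ) * chiSqTail d (lam * log n - 1)) atTop (𝓝 0) := by
  have hlam0 : 0 < lam := by linarith
  obtain ⟨a, ha, ha', halam⟩ : ∃ a : ℝ, 0 < a ∧ a < 1 / 2 ∧ 1 < a * lam := by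
    refine ⟨(1 / 2 + 1 / lam) / 2, by positivity, ?_, ?_⟩
    · linarith [one_div_lt_one_div_of_lt two_pos hlam]
    · rw [show (1 / 2 + 1 / lam) / 2 * lam = lam / 4 + 1 / 2 by field_simp; ring]
      linarith
  have hlog : Tendsto (fun n : ℕ => log n) atTop atTop :=
    tendsto_log_atTop.comp tendsto_natCast_atTop_atTop
  have hx : Tendsto (fun n : ℕ => lam * log n - 1) atTop atTop :=
    tendsto_atTop_add_const_right _ _ (hlog.const_mul_atTop hlam0)
  refine ((isBigO_refl _ _).mul ((chiSqTail_isBigO_exp d ha ha').comp_tendsto hx))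
    |>.trans_tendsto (tendsto_natCast_mul_exp_neg ?_)
  refine (tendsto_atBot_add_const_right _ a
    ((tendsto_const_mul_atBot_of_neg (by linarith : 1 - a * lam < 0)).2 hlog)).congr fun n => ?_
  ring

lemma tendsto_log_sub_mul_rpow_one_third {c : ℝ} (hc : 0 < c) {k : ℕ → ℕ}
    (hk : Tendsto (fun n => (k n : ℝ) / log n ^ 4) atTop atTop) :
    Tendsto (fun n : ℕ => log n - c * (k n : ℝ) ^ ((1 : ℝ) / 3)) atTop atBot := by
  have hlog : Tendsto (fun n : ℕ => log n) atTop atTop :=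
    tendsto_log_atTop.comp tendsto_natCast_atTop_atTop
  refine tendsto_atBot_mono' atTop ?_ (tendsto_neg_atTop_atBot.comp hlog)
  filter_upwards [hlog.eventually_ge_atTop 1, hk.eventually_ge_atTop ((2 / c) ^ 3)] with n hl hkn
  have hl0 : 0 < log n := one_pos.trans_le hl
  -- `k ≥ (2/c)³ log⁴ n ≥ (2 log n / c)³`, so `c k^{1/3} ≥ 2 log n`
  have hcube : (2 * log n / c) ^ 3 ≤ k n :=
    calc (2 * log n / c) ^ 3 = (2 / c) ^ 3 * log n ^ 3 := by ring
      _ ≤ (2 / c) ^ 3 * log n ^ 4 := by gcongr; norm_num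
      _ ≤ k n := (le_div_iff₀ (by positivity)).1 hkn
  have hroot : 2 * log n / c ≤ (k n : ℝ) ^ ((1 : ℝ) / 3) := by
    rw [one_div, le_rpow_inv_iff_of_pos (by positivity) (by positivity) (by norm_num)]
    exact_mod_cast hcube
  rw [div_le_iff₀ hc] at hroot
  simp only [Function.comp_apply]
  linarith

lemma tendsto_natCast_mul_comp_of_isBigO {f : ℕ → ℝ} {c : ℝ} (hc : 0 < c)
    (hf : f =O[atTop] fun j : ℕ => exp (-(c * (j : ℝ) ^ ((1 : ℝ) / 3)))) {k : ℕ → ℕ}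
    (hk : Tendsto (fun n => (k n : ℝ) / log n ^ 4) atTop atTop) :
    Tendsto (fun n : ℕ => (n : ℝ) * f (k n)) atTop (𝓝 0) := by
  have hkN : Tendsto k atTop atTop := by
    refine tendsto_natCast_atTop_iff.1 (tendsto_atTop_mono' atTop ?_ hk)
    filter_upwards [(tendsto_log_atTop.comp tendsto_natCast_atTop_atTop).eventually_ge_atTop 1]
      with n hl
    exact div_le_self (Nat.cast_nonneg _) (one_le_pow₀ hl)
  exact ((isBigO_refl _ _).mul (hf.comp_tendsto hkN)).trans_tendsto
    (tendsto_natCast_mul_exp_neg (tendsto_log_sub_mul_rpow_one_third hc hk))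

lemma Hfun_one_isBigO {d : ℕ} (hd : 0 < d) :
    ∃ c > 0, (fun k : ℕ => Hfun d k 1) =O[atTop]
      fun k : ℕ => exp (-(c * (k : ℝ) ^ ((1 : ℝ) / 3))) := by
  have hd' : (0 : ℝ) < d := by exact_mod_cast hd
  set A : ℝ := ((d : ℝ) + 2) ^ (-(4 : ℝ) / 3)
  set B : ℝ := ((d : ℝ) + 2) ^ ((1 : ℝ) / 3)
  have hA : 0 < A := by positivity
  refine ⟨A / (4 * d ^ 2), by positivity, IsBigO.of_bound 1 ?_⟩
  filter_upwards [eventually_ge_atTop (d + 2)] with k hk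
  set κ : ℝ := (k : ℝ) ^ ((1 : ℝ) / 3)
  have hκ3 : κ ^ 3 = k := by
    rw [← rpow_natCast, ← rpow_mul (Nat.cast_nonneg k)]
    norm_num
  have hBκ : B ≤ κ := rpow_le_rpow (by positivity) (by exact_mod_cast hk) (by norm_num)
  have hB : 0 < B := by positivity
  rw [one_mul, Real.norm_of_nonneg (exp_pos _).le, Hfun, Real.norm_of_nonneg (exp_pos _).le,
    one_rpow, one_rpow, mul_one, mul_one, exp_le_exp, neg_div, neg_le_neg_iff]
  -- `κ ≥ B` gives `(κ + B)² ≤ 4 κ²`, and `k = κ³`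
  calc A / (4 * d ^ 2) * κ = k * A / (d ^ 2 * (2 * κ) ^ 2) := by
        rw [← hκ3]; field_simp; ring
    _ ≤ k * A / (d ^ 2 * (κ + B) ^ 2) := by gcongr; linarith

lemma Rfun_one_isBigO {d : ℕ} (hd : 0 < d) :
    ∃ c > 0, (fun k : ℕ => Rfun d k 1) =O[atTop]
      fun k : ℕ => exp (-(c * (k : ℝ) ^ ((1 : ℝ) / 3))) := by
  have hd' : (0 : ℝ) < d := by exact_mod_cast hd
  refine ⟨((d : ℝ) ^ 2 * ((d : ℝ) + 2) ^ ((4 : ℝ) / 3))⁻¹, by positivity,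
    EventuallyEq.isBigO (.of_eq (funext fun k => ?_))⟩
  rw [Rfun, one_rpow, mul_one, neg_div, div_eq_inv_mul]

def GfunObjective (d k : ℕ) (t ε : ℝ) : ℝ :=
  (2 * Real.exp 3 / 9) * chiSqTail d (t - ε) + ((d : ℝ) ^ 2 + d) * Hfun d k ε +
    2 * d * Rfun d k ε

lemma GfunObjective_nonneg (d k : ℕ) {t ε : ℝ} (hε : ε ≤ t) : 0 ≤ GfunObjective d k t ε := by
  have := chiSqTail_nonneg d (sub_nonneg.2 hε)
  unfold GfunObjective Hfun Rfun
  positivity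

lemma Gfun_nonneg (d k : ℕ) (t : ℝ) : 0 ≤ Gfun d k t :=
  sInf_nonneg fun _ ⟨_, hε, hv⟩ => hv ▸ GfunObjective_nonneg d k hε.2

lemma Gfun_le_objective (d k : ℕ) {t ε : ℝ} (hε : ε ∈ Icc 0 t) :
    Gfun d k t ≤ GfunObjective d k t ε :=
  csInf_le ⟨0, fun _ ⟨_, hε', hv⟩ => hv ▸ GfunObjective_nonneg d k hε'.2⟩ (mem_image_of_mem _ hε)

/-- If `k_n/(ln n)⁴ → ∞`, then for every `λ > 2`, `n·G_{k_n}(λ ln n) → 0`. -/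
theorem tendsto_n_mul_G (d : ℕ) (hd : 1 ≤ d) (k : ℕ → ℕ)
    (hk : Tendsto (fun n => (k n : ℝ) / (Real.log n) ^ 4) atTop atTop)
    (lam : ℝ) (hlam : 2 < lam) :
    Tendsto (fun (n : ℕ) => (n : ℝ) * Gfun d (k n) (lam * Real.log n)) atTop (𝓝 0) := by
  obtain ⟨cH, hcH, hH⟩ := Hfun_one_isBigO hd
  obtain ⟨cR, hcR, hR⟩ := Rfun_one_isBigO hd
  have hdom := (((tendsto_natCast_mul_chiSqTail d hlam).const_mul (2 * exp 3 / 9)).add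
    ((tendsto_natCast_mul_comp_of_isBigO hcH hH hk).const_mul ((d : ℝ) ^ 2 + d))).add
    ((tendsto_natCast_mul_comp_of_isBigO hcR hR hk).const_mul (2 * d : ℝ))
  simp only [mul_zero, add_zero] at hdom
  refine squeeze_zero' (.of_forall fun n => mul_nonneg n.cast_nonneg (Gfun_nonneg d _ _)) ?_ hdom
  have ht : Tendsto (fun n : ℕ => lam * log n) atTop atTop :=
    (tendsto_log_atTop.comp tendsto_natCast_atTop_atTop).const_mul_atTop (by linarith)
  filter_upwards [ht.eventually_ge_atTop 1] with n hn
  calc (n : ℝ) * Gfun d (k n) (lam * log n)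
      ≤ n * GfunObjective d (k n) (lam * log n) 1 :=
        mul_le_mul_of_nonneg_left (Gfun_le_objective d (k n) ⟨zero_le_one, hn⟩) n.cast_nonneg
    _ = _ := by unfold GfunObjective; ring
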